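/- Let T be a finite tree, N its set of leaves, and assume every vertex of T not in N has degree ≥ 2. For an ordering (e_1,...,e_n) of the edges define α(k) = 0 if both ends of e_k can be reached from N using edges e_1,...,e_{k-1} only, and α(k) = 1 otherwise. Then Σ_{k=1}^n α(k) = n − (#N − 1). -/

import Mathlib

/-! Let `c m` be the number of connected components containing a leaf of the graph spanned by the
first `m` edges. As `T` is acyclic, the edge `e_k` joins two different components of the
previous graph, so adding it lowers `c` by one when both of its ends already reach a leaf
(`α(k) = 0`) and leaves `c` unchanged otherwise. Hence the number of `k` with `α(k) = 0` is
`c 0 - c n = #N - 1`, since `c 0 = #N` and `c n = min #N 1` by connectedness. -/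

open scoped Classical
open SimpleGraph Finset

/-- The subgraph spanned by the edges `σ e_i` with `i < k`. -/
noncomputable def prefixGraph {V : Type*} (T : SimpleGraph V) {n : ℕ}
    (σ : Fin n ≃ T.edgeSet) (k : Fin n) : SimpleGraph V :=
  SimpleGraph.fromEdgeSet {e | ∃ i : Fin n, i < k ∧ (σ i : Sym2 V) = e}

lemma Finset.card_image_add_ite_of_eq_iff {α β : Type*} [DecidableEq α] [DecidableEq β]
    {f : α → β} {a b : α} (hab : a ≠ b)
    (hf : ∀ x y, f x = f y ↔ x = y ∨ (x = a ∧ y = b) ∨ (x = b ∧ y = a)) (s : Finset α) :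
    #(s.image f) + (if a ∈ s ∧ b ∈ s then 1 else 0) = #s := by
  split_ifs with h
  · have himage : s.image f = (s.erase a).image f := by
      refine (image_subset_image (erase_subset a s)).antisymm' fun z hz ↦ ?_
      obtain ⟨x, hx, rfl⟩ := mem_image.1 hz
      obtain rfl | hxa := eq_or_ne x a
      · exact mem_image.2 ⟨b, mem_erase.2 ⟨hab.symm, h.2⟩, (hf _ _).2 (.inr (.inr ⟨rfl, rfl⟩))⟩
      · exact mem_image_of_mem f (mem_erase.2 ⟨hxa, hx⟩)
    have hinj : Set.InjOn f (s.erase a) := fun x hx y hy hxy ↦ by grind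
    rw [himage, card_image_of_injOn hinj, card_erase_of_mem h.1]
    have := card_pos.2 ⟨a, h.1⟩
    omega
  · have hinj : Set.InjOn f s := fun x hx y hy hxy ↦ by grind
    rw [card_image_of_injOn hinj, add_zero]

namespace SimpleGraph

variable {V : Type*} {G : SimpleGraph V}

lemma reachable_sup_edge_iff {u v x y : V} :
    (G ⊔ edge u v).Reachable x y ↔ G.Reachable x y ∨
      (G.Reachable x u ∧ G.Reachable v y) ∨ (G.Reachable x v ∧ G.Reachable u y) := by
  constructor
  · rintro ⟨w⟩
    induction w with
    | nil => exact .inl .rfl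
    | @cons a b c hab _ ih =>
      rcases hab with hab | hab
      · have := hab.reachable
        rcases ih with _ | _ | _ <;> grind [Reachable.trans]
      · rw [edge_adj] at hab
        rcases hab with ⟨⟨rfl, rfl⟩ | ⟨rfl, rfl⟩, -⟩ <;> rcases ih with _ | _ | _ <;>
          grind [Reachable.refl, Reachable.trans]
  · have hle : G ≤ G ⊔ edge u v := le_sup_left
    have huv : (G ⊔ edge u v).Reachable u v := by
      obtain rfl | hne := eq_or_ne u v
      · rfl
      · exact Adj.reachable (.inr ((edge_adj ..).2 ⟨.inl ⟨rfl, rfl⟩, hne⟩))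
    rintro (h | ⟨h₁, h₂⟩ | ⟨h₁, h₂⟩)
    · exact h.mono hle
    · exact ((h₁.mono hle).trans huv).trans (h₂.mono hle)
    · exact ((h₁.mono hle).trans huv.symm).trans (h₂.mono hle)

lemma ConnectedComponent.map_sup_edge_eq_iff {u v : V} {C D : G.ConnectedComponent} :
    C.map (Hom.ofLE (le_sup_left : G ≤ G ⊔ edge u v)) = D.map (Hom.ofLE le_sup_left) ↔
      C = D ∨ (C = G.connectedComponentMk u ∧ D = G.connectedComponentMk v) ∨
        (C = G.connectedComponentMk v ∧ D = G.connectedComponentMk u) := by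
  induction C, D using ConnectedComponent.ind₂ with | h x y =>
  simp only [ConnectedComponent.map_mk, ConnectedComponent.eq, Hom.coe_ofLE, id]
  rw [reachable_sup_edge_iff]
  simp [reachable_comm]

noncomputable def componentsMeeting (G : SimpleGraph V) (N : Finset V) :
    Finset G.ConnectedComponent :=
  N.image G.connectedComponentMk

lemma connectedComponentMk_mem_componentsMeeting {N : Finset V} {x : V} :
    G.connectedComponentMk x ∈ G.componentsMeeting N ↔ ∃ y ∈ N, G.Reachable x y := by
  simp [componentsMeeting, ConnectedComponent.eq, reachable_comm]

lemma componentsMeeting_sup_edge (u v : V) (N : Finset V) :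
    (G ⊔ edge u v).componentsMeeting N =
      (G.componentsMeeting N).image (ConnectedComponent.map (Hom.ofLE le_sup_left)) := by
  simp [componentsMeeting, image_image, Function.comp_def, ConnectedComponent.map_mk]

lemma card_componentsMeeting_sup_edge {u v : V} (huv : ¬G.Reachable u v) (N : Finset V) :
    #((G ⊔ edge u v).componentsMeeting N) +
        (if ∀ x ∈ s(u, v), ∃ y ∈ N, G.Reachable x y then 1 else 0) =
      #(G.componentsMeeting N) := by
  rw [componentsMeeting_sup_edge, Sym2.forall_mem_pair]
  simp only [← connectedComponentMk_mem_componentsMeeting]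
  exact card_image_add_ite_of_eq_iff (fun h ↦ huv (ConnectedComponent.eq.1 h))
    (fun _ _ ↦ ConnectedComponent.map_sup_edge_eq_iff) _

lemma card_componentsMeeting_bot (N : Finset V) :
    #((⊥ : SimpleGraph V).componentsMeeting N) = #N :=
  card_image_of_injective _ fun _ _ h ↦ reachable_bot.1 (ConnectedComponent.eq.1 h)

lemma Preconnected.card_componentsMeeting (hG : G.Preconnected) (N : Finset V) :
    #(G.componentsMeeting N) = min #N 1 := by
  obtain rfl | ⟨x, hx⟩ := N.eq_empty_or_nonempty
  · simp [componentsMeeting]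
  · rw [card_eq_one.2 ⟨G.connectedComponentMk x, ?_⟩, min_eq_right (card_pos.2 ⟨x, hx⟩)]
    refine eq_singleton_iff_unique_mem.2 ⟨mem_image_of_mem _ hx, ?_⟩
    simp only [componentsMeeting, mem_image]
    rintro _ ⟨y, -, rfl⟩
    exact ConnectedComponent.eq.2 (hG y x)

end SimpleGraph

section PrefixGraph

variable {V : Type*} {T : SimpleGraph V} {n : ℕ} (σ : Fin n ≃ T.edgeSet)

noncomputable def prefixGraphNat (m : ℕ) : SimpleGraph V :=
  fromEdgeSet {e | ∃ i : Fin n, (i : ℕ) < m ∧ (σ i : Sym2 V) = e}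

lemma prefixGraphNat_coe (k : Fin n) : prefixGraphNat σ k = prefixGraph T σ k :=
  rfl

lemma prefixGraphNat_zero : prefixGraphNat σ 0 = ⊥ := by
  simp [prefixGraphNat]

lemma prefixGraphNat_self : prefixGraphNat σ n = T := by
  have : {e | ∃ i : Fin n, (i : ℕ) < n ∧ (σ i : Sym2 V) = e} = T.edgeSet := by
    ext e
    refine ⟨fun ⟨i, _, he⟩ ↦ he ▸ (σ i).2, fun he ↦ ⟨σ.symm ⟨e, he⟩, Fin.is_lt _, by simp⟩⟩
  rw [prefixGraphNat, this, fromEdgeSet_edgeSet]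

lemma prefixGraphNat_succ (k : Fin n) :
    prefixGraphNat σ (k + 1) = prefixGraph T σ k ⊔ fromEdgeSet {(σ k : Sym2 V)} := by
  rw [prefixGraphNat, prefixGraph, ← fromEdgeSet_union]
  congr 1
  ext e
  simp only [Set.mem_ofPred_eq, Set.mem_union, Set.mem_singleton_iff, Nat.lt_succ_iff_lt_or_eq,
    or_and_right, exists_or, Fin.val_inj, ← Fin.lt_def]
  grind

lemma prefixGraph_le_deleteEdges (k : Fin n) :
    prefixGraph T σ k ≤ T.deleteEdges {(σ k : Sym2 V)} := by
  intro x y hxy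
  obtain ⟨⟨i, hik, he⟩, -⟩ := (fromEdgeSet_adj _).1 hxy
  rw [deleteEdges_adj, ← mem_edgeSet, ← he, Set.mem_singleton_iff]
  exact ⟨(σ i).2, fun h ↦ hik.ne (σ.injective (Subtype.ext h))⟩

lemma card_componentsMeeting_prefixGraphNat_succ (hT : T.IsAcyclic) (N : Finset V) (k : Fin n) :
    #((prefixGraphNat σ (k + 1)).componentsMeeting N) +
        (if ∀ x ∈ (σ k : Sym2 V), ∃ y ∈ N, (prefixGraph T σ k).Reachable x y then 1 else 0) =
      #((prefixGraph T σ k).componentsMeeting N) := by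
  have hle := prefixGraph_le_deleteEdges σ k
  have hbridge := isAcyclic_iff_forall_isBridge.1 hT (σ k).2
  rw [prefixGraphNat_succ]
  generalize (σ k : Sym2 V) = e at hle hbridge ⊢
  induction e with | h u v =>
  exact card_componentsMeeting_sup_edge (fun h ↦ hbridge (h.mono hle)) N

theorem sum_ite_reachable_add_card_componentsMeeting (hT : T.IsAcyclic) (N : Finset V) :
    ∑ k : Fin n,
        (if ∀ x ∈ (σ k : Sym2 V), ∃ y ∈ N, (prefixGraph T σ k).Reachable x y then 1 else 0) +
      #(T.componentsMeeting N) = #N := by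
  set c : ℕ → ℤ := fun m ↦ #((prefixGraphNat σ m).componentsMeeting N)
  have hstep (k : Fin n) :
      (if ∀ x ∈ (σ k : Sym2 V), ∃ y ∈ N, (prefixGraph T σ k).Reachable x y then 1 else 0 : ℤ) =
        c k - c (k + 1) := by
    have := congrArg (Nat.cast : ℕ → ℤ) (card_componentsMeeting_prefixGraphNat_succ σ hT N k)
    push_cast at this
    simp only [c, prefixGraphNat_coe]
    linarith
  zify
  rw [sum_congr rfl fun k _ ↦ hstep k, Fin.sum_univ_eq_sum_range (fun i ↦ c i - c (i + 1)),
    sum_range_sub']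
  simp only [c]
  rw [prefixGraphNat_zero, prefixGraphNat_self, card_componentsMeeting_bot]
  ring

end PrefixGraph

theorem alphaSum_leaves_general {V : Type*} [Fintype V]
    (T : SimpleGraph V) (hT : T.IsTree)
    (n : ℕ) (σ : Fin n ≃ T.edgeSet) :
    (∑ k : Fin n, if (∀ x ∈ (σ k : Sym2 V), ∃ y, T.degree y = 1 ∧
          (prefixGraph T σ k).Reachable x y) then 0 else 1)
      = n - ((Finset.univ.filter (fun v => T.degree v = 1)).card - 1) := by
  have hβ := sum_ite_reachable_add_card_componentsMeeting σ hT.isAcyclic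
    (univ.filter fun v ↦ T.degree v = 1)
  rw [hT.connected.preconnected.card_componentsMeeting] at hβ
  simp only [mem_filter, mem_univ, true_and] at hβ
  have hαβ := card_filter_add_card_filter_not (s := (univ : Finset (Fin n)))
    fun k ↦ ∀ x ∈ (σ k : Sym2 V), ∃ y, T.degree y = 1 ∧ (prefixGraph T σ k).Reachable x y
  simp only [sum_ite, sum_const_zero, sum_const, smul_eq_mul, mul_one, zero_add, card_univ,
    Fintype.card_fin] at hβ hαβ ⊢
  omega

/-- Let `T` be a finite tree with `n ≥ 1` edges, let `N` be its set of leaves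
(degree-1 vertices), and assume every vertex not in `N` has degree ≥ 2.
For an ordering `(e_1, …, e_n)` of the edges, let `α(k) = 0` if both ends of
`e_k` can be reached from `N` using only the edges `e_1, …, e_{k-1}` (length-0
paths allowed), and `α(k) = 1` otherwise.  Then `∑ α(k) = n - (#N - 1)`. -/
theorem alphaSum_leaves {V : Type*} [Fintype V]
    (T : SimpleGraph V) (hT : T.IsTree)
    (hdeg : ∀ v, T.degree v ≠ 1 → 2 ≤ T.degree v)
    (n : ℕ) (hn : 1 ≤ n) (σ : Fin n ≃ T.edgeSet) :
    (∑ k : Fin n, if (∀ x ∈ (σ k : Sym2 V), ∃ y, T.degree y = 1 ∧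
          (prefixGraph T σ k).Reachable x y) then 0 else 1)
      = n - ((Finset.univ.filter (fun v => T.degree v = 1)).card - 1) :=
  alphaSum_leaves_general T hT n σ
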